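/- The even continued fraction representation of a nonnegative rational q/p (with gcd(p,q)=1 and p+q odd) is unique: if two even continued fractions [c₁±, …, c_k] and [d₁±, …, d_m] represent the same rational number, then k = m, cᵢ = dᵢ for all i, and the corresponding signs agree. -/

import Mathlib

/-!
Every term after the first is even and positive, hence at least `2`, so by induction every
tail `[d₁±, …]` has value `> 1` and the value of `[c±, d₁±, …]` lies strictly between `c - 1`
and `c + 1`. Two even integers at distance `< 2` coincide, so the first terms agree; then the
remaining summands `±1/v` agree, and since `v > 0` this forces equal signs and equal tail values,
and induction finishes.
-/

/-- The value of the even continued fraction `c ± 1/(d₁ ± 1/( ⋯ ))`, where the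
tail is the list of pairs (sign, term); `true` stands for `+`. -/
def ecfVal : ℤ → List (Bool × ℤ) → ℚ
  | c, [] => (c : ℚ)
  | c, (ε, d) :: t => (c : ℚ) + (if ε then 1 else -1) / ecfVal d t

lemma abs_sign_div_lt_one (ε : Bool) {v : ℚ} (hv : 1 < v) :
    |(if ε then (1 : ℚ) else -1) / v| < 1 := by
  rw [abs_div, abs_of_pos (one_pos.trans hv), div_lt_one (one_pos.trans hv)]
  cases ε <;> simpa using hv

lemma sign_div_ne_zero (ε : Bool) {v : ℚ} (hv : 0 < v) : (if ε then (1 : ℚ) else -1) / v ≠ 0 := by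
  cases ε <;> simp [hv.ne']

lemma sign_div_injective {ε ε' : Bool} {v v' : ℚ} (hv : 0 < v) (hv' : 0 < v')
    (h : (if ε then (1 : ℚ) else -1) / v = (if ε' then (1 : ℚ) else -1) / v') :
    ε = ε' ∧ v = v' := by
  have hpos : 0 < 1 / v := one_div_pos.2 hv
  have hpos' : 0 < 1 / v' := one_div_pos.2 hv'
  cases ε <;> cases ε' <;> simp only [Bool.false_eq_true, ite_true, ite_false, neg_div] at h
  · exact ⟨rfl, by simpa using h⟩
  · linarith
  · linarith
  · exact ⟨rfl, by simpa using h⟩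

lemma abs_ecfVal_sub_lt_one (c : ℤ) {t : List (Bool × ℤ)} (ht : ∀ x ∈ t, Even x.2 ∧ 0 < x.2) :
    |ecfVal c t - c| < 1 := by
  induction t generalizing c with
  | nil => simp [ecfVal]
  | cons x s ih =>
    obtain ⟨ε, e⟩ := x
    obtain ⟨⟨he, he0⟩, hs⟩ := List.forall_mem_cons.1 ht
    have he2 : (2 : ℚ) ≤ e := by obtain ⟨k, rfl⟩ := he; exact_mod_cast (by omega : 2 ≤ k + k)
    have hv : 1 < ecfVal e s := by linarith [(abs_lt.1 (ih e hs)).1]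
    simpa [ecfVal] using abs_sign_div_lt_one ε hv

lemma one_lt_ecfVal {d : ℤ} {t : List (Bool × ℤ)} (hd : Even d) (hd0 : 0 < d)
    (ht : ∀ x ∈ t, Even x.2 ∧ 0 < x.2) : 1 < ecfVal d t := by
  have hd2 : (2 : ℚ) ≤ d := by obtain ⟨k, rfl⟩ := hd; exact_mod_cast (by omega : 2 ≤ k + k)
  linarith [(abs_lt.1 (abs_ecfVal_sub_lt_one d ht)).1]

lemma Int.eq_of_even_of_abs_sub_lt_two {a b : ℤ} (ha : Even a) (hb : Even b) (h : |a - b| < 2) :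
    a = b := by
  obtain ⟨k, rfl⟩ := ha
  obtain ⟨l, rfl⟩ := hb
  rw [abs_lt] at h
  omega

lemma head_eq_of_ecfVal_eq {c c' : ℤ} {t t' : List (Bool × ℤ)} (hc : Even c) (hc' : Even c')
    (ht : ∀ x ∈ t, Even x.2 ∧ 0 < x.2) (ht' : ∀ x ∈ t', Even x.2 ∧ 0 < x.2)
    (heq : ecfVal c t = ecfVal c' t') : c = c' := by
  refine Int.eq_of_even_of_abs_sub_lt_two hc hc' ?_
  have h := abs_ecfVal_sub_lt_one c ht
  have h' := abs_ecfVal_sub_lt_one c' ht'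
  rw [heq] at h
  have hq : |((c - c' : ℤ) : ℚ)| < 2 := by
    calc |((c - c' : ℤ) : ℚ)| = |(ecfVal c' t' - c') - (ecfVal c' t' - c)| := by push_cast; ring_nf
      _ ≤ |ecfVal c' t' - c'| + |ecfVal c' t' - c| := abs_sub _ _
      _ < 2 := by linarith
  exact_mod_cast hq

lemma ecfVal_cons_ne {c e : ℤ} {ε : Bool} {s : List (Bool × ℤ)}
    (ht : ∀ x ∈ (ε, e) :: s, Even x.2 ∧ 0 < x.2) : ecfVal c ((ε, e) :: s) ≠ c := by
  obtain ⟨⟨he, he0⟩, hs⟩ := List.forall_mem_cons.1 ht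
  simpa [ecfVal] using sign_div_ne_zero ε (one_pos.trans (one_lt_ecfVal he he0 hs))

lemma ecfVal_cons_inj {c e e' : ℤ} {ε ε' : Bool} {s s' : List (Bool × ℤ)}
    (ht : ∀ x ∈ (ε, e) :: s, Even x.2 ∧ 0 < x.2) (ht' : ∀ x ∈ (ε', e') :: s', Even x.2 ∧ 0 < x.2)
    (heq : ecfVal c ((ε, e) :: s) = ecfVal c ((ε', e') :: s')) :
    ε = ε' ∧ ecfVal e s = ecfVal e' s' := by
  obtain ⟨⟨he, he0⟩, hs⟩ := List.forall_mem_cons.1 ht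
  obtain ⟨⟨he', he0'⟩, hs'⟩ := List.forall_mem_cons.1 ht'
  simp only [ecfVal, add_right_inj] at heq
  exact sign_div_injective (one_pos.trans (one_lt_ecfVal he he0 hs))
    (one_pos.trans (one_lt_ecfVal he' he0' hs')) heq

theorem even_continued_fraction_unique_general (c c' : ℤ) (t t' : List (Bool × ℤ))
    (hc : Even c) (ht : ∀ x ∈ t, Even x.2 ∧ 0 < x.2)
    (hc' : Even c') (ht' : ∀ x ∈ t', Even x.2 ∧ 0 < x.2)
    (heq : ecfVal c t = ecfVal c' t') : c = c' ∧ t = t' := by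
  obtain rfl := head_eq_of_ecfVal_eq hc hc' ht ht' heq
  refine ⟨rfl, ?_⟩
  induction t generalizing c t' with
  | nil =>
    cases t' with
    | nil => rfl
    | cons x s' => exact absurd heq.symm (ecfVal_cons_ne ht')
  | cons x s ih =>
    cases t' with
    | nil => exact absurd heq (ecfVal_cons_ne ht)
    | cons x' s' =>
      obtain ⟨ε, e⟩ := x
      obtain ⟨ε', e'⟩ := x'
      obtain ⟨rfl, hv⟩ := ecfVal_cons_inj ht ht' heq
      obtain ⟨⟨he, -⟩, hs⟩ := List.forall_mem_cons.1 ht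
      obtain ⟨⟨he', -⟩, hs'⟩ := List.forall_mem_cons.1 ht'
      obtain rfl := head_eq_of_ecfVal_eq he he' hs hs' hv
      rw [ih e s' he hs hs' he hv]

theorem even_continued_fraction_unique (c c' : ℤ) (t t' : List (Bool × ℤ))
    (hc : Even c) (hc0 : 0 ≤ c) (ht : ∀ x ∈ t, Even x.2 ∧ 0 < x.2)
    (hc' : Even c') (hc0' : 0 ≤ c') (ht' : ∀ x ∈ t', Even x.2 ∧ 0 < x.2)
    (heq : ecfVal c t = ecfVal c' t') : c = c' ∧ t = t' :=
  even_continued_fraction_unique_general c c' t t' hc ht hc' ht' heq
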